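/- Let Y : ℝ²_{≥0} → ℝ_{≥0} be differentiable on the open positive quadrant, positive there, homogeneous of degree 1, and suppose there exists β > 0 such that for all w, r, K₀, L₀ > 0: the cost c(K,L) = rK + wL has a unique minimum on some isoquant {Y = q} (q > 0) at (K₀,L₀) if and only if K₀ = L₀·(w/r)·β. Then there exist A > 0 and 0 < α < 1 (namely α = β/(β+1)) with Y(K,L) = A·K^α·L^(1−α) for all K, L > 0. -/

import Mathlib

/-!
If `(a, b)` minimises the cost `r K + w L` on its isoquant, homogeneity moves any `(c, d)` onto
that isoquant by a scaling, whence `Y (c, d) * (r a + w b) ≤ Y (a, b) * (r c + w d)`. At the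
point `(exp y, 1)` with the prices the hypothesis attaches to it, this says that
`φ t = log Y (exp t, 1) - α t` satisfies `φ x - φ y ≤ ψ (x - y)`, where
`ψ h = log ((β exp h + 1) / (β + 1)) - α h` compares a weighted arithmetic mean with the
corresponding geometric mean and so vanishes to second order at `0`. Used in both directions,
the inequality forces `φ' = 0`, so `φ` is constant, and homogeneity gives the Cobb–Douglas form.
-/

open Real Asymptotics Filter Topology

theorem hasDerivAt_zero_of_sub_le {f ψ : ℝ → ℝ} (hψ : ψ =o[𝓝 0] fun h => h)
    (hf : ∀ x y, f x - f y ≤ ψ (x - y)) (x : ℝ) : HasDerivAt f 0 x := by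
  have hψneg : (fun h => ψ (-h)) =o[𝓝 0] fun h => h := by
    have := hψ.comp_tendsto (show Tendsto Neg.neg (𝓝 (0:ℝ)) (𝓝 0) by
      simpa using (continuous_neg.tendsto (0:ℝ)))
    exact this.trans_isBigO (isBigO_refl (fun h : ℝ => h) _).neg_left
  rw [hasDerivAt_iff_isLittleO_nhds_zero]
  refine (IsBigO.of_bound' (Eventually.of_forall fun h => ?_)).trans_isLittleO
    (hψ.abs_left.add hψneg.abs_left)
  have hup := hf (x + h) x
  have hdown := hf x (x + h)
  simp only [add_sub_cancel_left, sub_add_cancel_left] at hup hdown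
  rw [smul_zero, sub_zero, norm_eq_abs, norm_of_nonneg (by positivity), abs_le]
  constructor <;> linarith [le_abs_self (ψ h), le_abs_self (ψ (-h)), abs_nonneg (ψ h),
    abs_nonneg (ψ (-h))]

theorem eq_of_sub_le_of_isLittleO {f ψ : ℝ → ℝ} (hψ : ψ =o[𝓝 0] fun h => h)
    (hf : ∀ x y, f x - f y ≤ ψ (x - y)) (x y : ℝ) : f x = f y :=
  is_const_of_deriv_eq_zero (fun z => (hasDerivAt_zero_of_sub_le hψ hf z).differentiableAt)
    (fun z => (hasDerivAt_zero_of_sub_le hψ hf z).deriv) x y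

theorem isLittleO_log_mean_exp {β : ℝ} (hβ : β + 1 ≠ 0) :
    (fun h => log (β * exp h + 1) - log (β + 1) - β / (β + 1) * h) =o[𝓝 0] fun h => h := by
  have hd := ((((hasDerivAt_exp 0).const_mul β).add_const 1).log (by simpa using hβ)).sub_const
    (log (β + 1)) |>.sub ((hasDerivAt_id' 0).const_mul (β / (β + 1)))
  have hd0 : HasDerivAt (fun h => log (β * exp h + 1) - log (β + 1) - β / (β + 1) * h) 0 0 :=
    hd.congr_deriv (by simp)
  simpa [hasDerivAt_iff_isLittleO_nhds_zero] using hd0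

theorem cost_mul_le_of_isoquant_min {Y : ℝ × ℝ → ℝ}
    (hpos : ∀ K L : ℝ, 0 < K → 0 < L → 0 < Y (K, L))
    (hhom : ∀ t > (0:ℝ), ∀ K L : ℝ, 0 < K → 0 < L → Y (t * K, t * L) = t * Y (K, L))
    {r w a b : ℝ} (ha : 0 < a) (hb : 0 < b)
    (hmin : ∀ K L : ℝ, 0 < K → 0 < L → Y (K, L) = Y (a, b) →
      r * a + w * b ≤ r * K + w * L)
    {c d : ℝ} (hc : 0 < c) (hd : 0 < d) :
    Y (c, d) * (r * a + w * b) ≤ Y (a, b) * (r * c + w * d) := by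
  have hYcd := hpos c d hc hd
  set s := Y (a, b) / Y (c, d)
  have hs : 0 < s := div_pos (hpos a b ha hb) hYcd
  have hscale : Y (s * c, s * d) = Y (a, b) := by
    rw [hhom s hs c d hc hd]; exact div_mul_cancel₀ _ hYcd.ne'
  calc Y (c, d) * (r * a + w * b)
      ≤ Y (c, d) * (r * (s * c) + w * (s * d)) :=
        mul_le_mul_of_nonneg_left (hmin _ _ (mul_pos hs hc) (mul_pos hs hd) hscale) hYcd.le
    _ = Y (a, b) * (r * c + w * d) := by simp only [s]; field_simp

theorem log_sub_log_le_of_isoquant_min {Y : ℝ × ℝ → ℝ}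
    (hpos : ∀ K L : ℝ, 0 < K → 0 < L → 0 < Y (K, L))
    (hhom : ∀ t > (0:ℝ), ∀ K L : ℝ, 0 < K → 0 < L → Y (t * K, t * L) = t * Y (K, L))
    {β : ℝ} (hβ : 0 ≤ β)
    (hmin : ∀ y : ℝ, ∀ K L : ℝ, 0 < K → 0 < L → Y (K, L) = Y (exp y, 1) →
      β * exp y + exp y * 1 ≤ β * K + exp y * L)
    (x y : ℝ) :
    log (Y (exp x, 1)) - log (Y (exp y, 1)) ≤ log (β * exp (x - y) + 1) - log (β + 1) := by
  have h :=
    cost_mul_le_of_isoquant_min hpos hhom (exp_pos y) one_pos (hmin y) (exp_pos x) one_pos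
  have hYx := hpos _ _ (exp_pos x) one_pos
  have hYy := hpos _ _ (exp_pos y) one_pos
  have hratio : Y (exp x, 1) * (β + 1) ≤ Y (exp y, 1) * (β * exp (x - y) + 1) := by
    have e1 : β * exp y + exp y * 1 = (β + 1) * exp y := by ring
    have e2 : β * exp x + exp y * 1 = (β * exp (x - y) + 1) * exp y := by
      rw [exp_sub]; field_simp
    rw [e1, e2, ← mul_assoc, ← mul_assoc] at h
    exact le_of_mul_le_mul_right h (exp_pos y)
  have hlog := log_le_log (by positivity) hratio
  rw [log_mul hYx.ne' (by positivity), log_mul hYy.ne' (by positivity)] at hlog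
  linarith

theorem eq_mul_rpow_mul_rpow_of_homogeneous {Y : ℝ × ℝ → ℝ}
    (hhom : ∀ t > (0:ℝ), ∀ K L : ℝ, 0 < K → 0 < L → Y (t * K, t * L) = t * Y (K, L))
    {A α : ℝ} (hY : ∀ t, Y (exp t, 1) = A * exp (α * t))
    {K L : ℝ} (hK : 0 < K) (hL : 0 < L) :
    Y (K, L) = A * K ^ α * L ^ (1 - α) := by
  have hKL : 0 < K / L := div_pos hK hL
  calc Y (K, L) = Y (L * (K / L), L * 1) := by rw [mul_div_cancel₀ _ hL.ne', mul_one]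
    _ = L * (A * (K / L) ^ α) := by
        rw [hhom L hL _ _ hKL one_pos, ← exp_log hKL, hY, rpow_def_of_pos (exp_pos _), log_exp,
          mul_comm α]
    _ = A * K ^ α * L ^ (1 - α) := by
        rw [div_rpow hK.le hL.le, rpow_sub hL, rpow_one]; field_simp

theorem stmt_7_general (Y : ℝ × ℝ → ℝ)
    (hpos : ∀ K L : ℝ, 0 < K → 0 < L → 0 < Y (K, L))
    (hhom : ∀ t > (0:ℝ), ∀ K L : ℝ, 0 < K → 0 < L → Y (t * K, t * L) = t * Y (K, L))
    (β : ℝ) (hβ : 0 < β)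
    (hcond : ∀ w r K₀ L₀ : ℝ, 0 < w → 0 < r → 0 < K₀ → 0 < L₀ →
      ((∃ q > (0:ℝ), Y (K₀, L₀) = q ∧
          ∀ K L : ℝ, 0 < K → 0 < L → Y (K, L) = q → (K, L) ≠ (K₀, L₀) →
            r * K₀ + w * L₀ < r * K + w * L)
        ↔ K₀ = L₀ * (w / r) * β)) :
    ∃ A : ℝ, 0 < A ∧ ∃ α : ℝ, α = β / (β + 1) ∧ 0 < α ∧ α < 1 ∧
      ∀ K L : ℝ, 0 < K → 0 < L → Y (K, L) = A * K ^ α * L ^ (1 - α) := by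
  have hβ1 : 0 < β + 1 := by linarith
  have hmin : ∀ a > 0, ∀ K L : ℝ, 0 < K → 0 < L → Y (K, L) = Y (a, 1) →
      β * a + a * 1 ≤ β * K + a * L := by
    intro a ha K L hK hL hYK
    obtain ⟨q, -, rfl, hlt⟩ := (hcond a β a 1 ha hβ ha one_pos).mpr (by field_simp)
    rcases eq_or_ne (K, L) (a, 1) with h | h
    · obtain ⟨rfl, rfl⟩ := Prod.mk.inj h; rfl
    · exact (hlt K L hK hL hYK h).le
  set φ : ℝ → ℝ := fun t => log (Y (exp t, 1)) - β / (β + 1) * t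
  set ψ : ℝ → ℝ := fun h => log (β * exp h + 1) - log (β + 1) - β / (β + 1) * h
  have hφ : ∀ x y, φ x - φ y ≤ ψ (x - y) := fun x y => by
    have := log_sub_log_le_of_isoquant_min hpos hhom hβ.le (fun y => hmin _ (exp_pos y)) x y
    simp only [φ, ψ]
    linarith
  have hY : ∀ t, Y (exp t, 1) = Y (1, 1) * exp (β / (β + 1) * t) := by
    intro t
    have h := eq_of_sub_le_of_isLittleO (isLittleO_log_mean_exp hβ1.ne') hφ t 0
    simp only [φ, exp_zero] at h
    rw [← exp_log (hpos _ _ (exp_pos t) one_pos), ← exp_log (hpos 1 1 one_pos one_pos),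
      ← exp_add]
    congr 1
    linarith
  refine ⟨Y (1, 1), hpos 1 1 one_pos one_pos, β / (β + 1), rfl, by positivity,
    (div_lt_one hβ1).2 (lt_add_one β), fun K L hK hL => ?_⟩
  exact eq_mul_rpow_mul_rpow_of_homogeneous hhom hY hK hL

theorem stmt_7 (Y : ℝ × ℝ → ℝ)
    (hnonneg : ∀ K L : ℝ, 0 ≤ K → 0 ≤ L → 0 ≤ Y (K, L))
    (hpos : ∀ K L : ℝ, 0 < K → 0 < L → 0 < Y (K, L))
    (hdiff : ∀ K L : ℝ, 0 < K → 0 < L → DifferentiableAt ℝ Y (K, L))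
    (hhom : ∀ t > (0:ℝ), ∀ K L : ℝ, 0 < K → 0 < L → Y (t * K, t * L) = t * Y (K, L))
    (β : ℝ) (hβ : 0 < β)
    (hcond : ∀ w r K₀ L₀ : ℝ, 0 < w → 0 < r → 0 < K₀ → 0 < L₀ →
      ((∃ q > (0:ℝ), Y (K₀, L₀) = q ∧
          ∀ K L : ℝ, 0 < K → 0 < L → Y (K, L) = q → (K, L) ≠ (K₀, L₀) →
            r * K₀ + w * L₀ < r * K + w * L)
        ↔ K₀ = L₀ * (w / r) * β)) :
    ∃ A : ℝ, 0 < A ∧ ∃ α : ℝ, α = β / (β + 1) ∧ 0 < α ∧ α < 1 ∧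
      ∀ K L : ℝ, 0 < K → 0 < L → Y (K, L) = A * K ^ α * L ^ (1 - α) :=
  stmt_7_general Y hpos hhom β hβ hcond
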